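/- arXiv:2403.07480 — 5 statements merged into one kernel-verified Lean document; each statement's English description precedes it below -/
import Mathlib

section
/- In a completely simple semigroup, the intersection of any minimal left ideal with any minimal right ideal contains a unique idempotent. -/
/-- A two-sided ideal of a semigroup. -/
def IsIdeal {S : Type*} [Semigroup S] (I : Set S) : Prop :=
  I.Nonempty ∧ ∀ s : S, ∀ x ∈ I, s * x ∈ I ∧ x * s ∈ I

/-- A left ideal of a semigroup. -/
def IsLeftIdeal {S : Type*} [Semigroup S] (I : Set S) : Prop :=
  I.Nonempty ∧ ∀ s : S, ∀ x ∈ I, s * x ∈ I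

/-- A right ideal of a semigroup. -/
def IsRightIdeal {S : Type*} [Semigroup S] (I : Set S) : Prop :=
  I.Nonempty ∧ ∀ s : S, ∀ x ∈ I, x * s ∈ I

/-- A minimal left ideal. -/
def IsMinimalLeftIdeal {S : Type*} [Semigroup S] (I : Set S) : Prop :=
  IsLeftIdeal I ∧ ∀ J : Set S, IsLeftIdeal J → J ⊆ I → J = I

/-- A minimal right ideal. -/
def IsMinimalRightIdeal {S : Type*} [Semigroup S] (I : Set S) : Prop :=
  IsRightIdeal I ∧ ∀ J : Set S, IsRightIdeal J → J ⊆ I → J = I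

/-- In a completely simple semigroup (simple with a primitive idempotent), the
intersection of any minimal left ideal with any minimal right ideal contains a
unique idempotent. -/
theorem stmt3 {S : Type*} [Semigroup S]
    (hsimple : ∀ I : Set S, IsIdeal I → I = Set.univ)
    (hprim : ∃ e : S, e * e = e ∧ ∀ f : S, f * f = f → (f * e = f ∧ e * f = f) → f = e)
    (L R : Set S) (hL : IsMinimalLeftIdeal L) (hR : IsMinimalRightIdeal R) :
    ∃! e : S, e ∈ L ∩ R ∧ e * e = e := by
  obtain ⟨hLl, hLmin⟩ := hL
  obtain ⟨⟨a0, ha0⟩, hLmul⟩ := hLl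
  obtain ⟨hRr, hRmin⟩ := hR
  obtain ⟨⟨b0, hb0⟩, hRmul⟩ := hRr
  obtain ⟨e0, he0, -⟩ := hprim
  -- simplicity: every element generates everything as a two-sided ideal
  have sandwich : ∀ c z : S, ∃ u v : S, z = u * c * v := by
    intro c z
    have hI : IsIdeal {x : S | ∃ u v : S, x = u * c * v} := by
      constructor
      · exact ⟨c * c * c, c, c, rfl⟩
      · rintro s x ⟨u, v, rfl⟩
        exact ⟨⟨s * u, v, by simp [mul_assoc]⟩, ⟨u, v * s, by simp [mul_assoc]⟩⟩
    have huniv := hsimple _ hI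
    have hz : z ∈ (Set.univ : Set S) := trivial
    rw [← huniv] at hz
    exact hz
  -- in a minimal left ideal, every element generates it
  have keyL : ∀ z ∈ L, ∀ t ∈ L, ∃ s : S, t = s * z := by
    intro z hz t ht
    have hI : IsLeftIdeal {x : S | ∃ s : S, x = s * z} :=
      ⟨⟨z * z, z, rfl⟩, by rintro s x ⟨r, rfl⟩; exact ⟨s * r, (mul_assoc s r z).symm⟩⟩
    have hsub : {x : S | ∃ s : S, x = s * z} ⊆ L := by
      rintro x ⟨r, rfl⟩; exact hLmul r z hz
    rw [← hLmin _ hI hsub] at ht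
    exact ht
  have keyR : ∀ z ∈ R, ∀ t ∈ R, ∃ s : S, t = z * s := by
    intro z hz t ht
    have hI : IsRightIdeal {x : S | ∃ s : S, x = z * s} :=
      ⟨⟨z * z, z, rfl⟩, by rintro s x ⟨r, rfl⟩; exact ⟨r * s, mul_assoc z r s⟩⟩
    have hsub : {x : S | ∃ s : S, x = z * s} ⊆ L → True := fun _ => trivial
    have hsub' : {x : S | ∃ s : S, x = z * s} ⊆ R := by
      rintro x ⟨r, rfl⟩; exact hRmul r z hz
    rw [← hRmin _ hI hsub'] at ht
    exact ht
  -- every idempotent in L is primitive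
  have primL : ∀ f ∈ L, f * f = f → ∀ g : S, g * g = g → g * f = g → f * g = g → g = f := by
    intro f hfL hff g hgg hgf hfg
    have hgL : g ∈ L := by rw [← hgf]; exact hLmul g f hfL
    obtain ⟨s, hs⟩ := keyL g hgL f hfL
    have h1 : f * g = f := by rw [hs, mul_assoc, hgg]
    rw [hfg] at h1
    exact h1
  -- uniqueness of idempotents in L ∩ R
  have uniq : ∀ x y : S, x ∈ L → x ∈ R → y ∈ L → y ∈ R → x * x = x → y * y = y → y = x := by
    intro x y hxL hxR hyL hyR hxx hyy
    obtain ⟨t, ht⟩ := keyR x hxR y hyR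
    have h2 : x * y = y := by rw [ht, ← mul_assoc, hxx]
    obtain ⟨s', hs'⟩ := keyL y hyL x hxL
    have h3 : x * y = x := by rw [hs', mul_assoc, hyy]
    exact (h3.symm.trans h2).symm
  -- construct an idempotent in L ∩ R
  have hcL : L.Nonempty := ⟨a0, ha0⟩
  set c := b0 * a0 with hc
  have hcmemL : c ∈ L := hLmul b0 a0 ha0
  have hcmemR : c ∈ R := hRmul a0 b0 hb0
  obtain ⟨u, v, huv⟩ := sandwich c e0
  have huvp : ∀ x : S, u * (c * (v * x)) = e0 * x := fun x => by
    simp only [← mul_assoc]; rw [← huv]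
  have he0p : ∀ x : S, e0 * (e0 * x) = e0 * x := fun x => by
    rw [← mul_assoc, he0]
  set w : S := c * v * e0 * u with hw
  set w' : S := v * e0 * u * c with hw'
  have hwR : w ∈ R := by
    have hweq : w = c * (v * e0 * u) := by rw [hw]; simp only [mul_assoc]
    rw [hweq]; exact hRmul (v * e0 * u) c hcmemR
  have hw'L : w' ∈ L := by
    rw [hw']; exact hLmul (v * e0 * u) c hcmemL
  have hww : w * w = w := by
    rw [hw]; simp only [mul_assoc]
    rw [huvp, he0p, he0p]
  have h2 : w' * w' = w' := by
    rw [hw']; simp only [mul_assoc]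
    rw [huvp, he0p, he0p]
  have h2p : ∀ x : S, w' * (w' * x) = w' * x := fun x => by rw [← mul_assoc, h2]
  set a : S := w' * w * w' with ha
  have hw'a : w' * a = a := by
    rw [ha]; simp only [← mul_assoc]; rw [h2]
  have haw' : a * w' = a := by
    rw [ha]; simp only [mul_assoc]; rw [h2]
  have hw'ap : ∀ x : S, w' * (a * x) = a * x := fun x => by rw [← mul_assoc, hw'a]
  have haw'p : ∀ x : S, a * (w' * x) = a * x := fun x => by rw [← mul_assoc, haw', mul_assoc]
  obtain ⟨p, q, hpq⟩ := sandwich a w'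
  have hpqp : ∀ x : S, p * (a * (q * x)) = w' * x := fun x => by
    simp only [← mul_assoc]; rw [← hpq]
  set P : S := w' * p * w' with hP
  set Q : S := w' * q * w' with hQ
  have hw'P : w' * P = P := by rw [hP]; simp only [← mul_assoc]; rw [h2]
  have hPw' : P * w' = P := by rw [hP]; simp only [mul_assoc]; rw [h2]
  have hw'Q : w' * Q = Q := by rw [hQ]; simp only [← mul_assoc]; rw [h2]
  have hQw' : Q * w' = Q := by rw [hQ]; simp only [mul_assoc]; rw [h2]
  have hPAQ : P * a * Q = w' := by
    rw [hP, hQ]; simp only [mul_assoc]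
    rw [hw'ap, haw'p, hpqp, h2p, h2]
  have hPAQp : ∀ x : S, P * (a * (Q * x)) = w' * x := fun x => by
    simp only [← mul_assoc]; rw [hPAQ]
  set f : S := Q * P with hf
  have hfw' : f * w' = f := by rw [hf]; simp only [mul_assoc]; rw [hPw']
  have hw'f : w' * f = f := by rw [hf, ← mul_assoc, hw'Q]
  have hfaf : f * (a * f) = f := by
    rw [hf]; simp only [mul_assoc]
    rw [hPAQp, hw'P]
  have haf_idem : (a * f) * (a * f) = a * f := by
    simp only [mul_assoc]; rw [hfaf]
  have hafw' : (a * f) * w' = a * f := by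
    simp only [mul_assoc]; rw [hfw']
  have hw'af : w' * (a * f) = a * f := by rw [← mul_assoc, hw'a]
  have haf : a * f = w' := primL w' hw'L h2 (a * f) haf_idem hafw' hw'af
  have hafa : a * (f * a) = a := by rw [← mul_assoc, haf, hw'a]
  have hfa_idem : (f * a) * (f * a) = f * a := by
    simp only [mul_assoc]; rw [hafa]
  have hfaw' : (f * a) * w' = f * a := by
    simp only [mul_assoc]; rw [haw']
  have hw'fa : w' * (f * a) = f * a := by rw [← mul_assoc, hw'f]
  have hfa : f * a = w' := primL w' hw'L h2 (f * a) hfa_idem hfaw' hw'fa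
  have hap : ∀ x : S, w' * (w * (w' * x)) = a * x := fun x => by
    rw [ha]; simp only [mul_assoc]
  have hkey : f * (w' * (w * f)) = f := by
    conv_lhs => rw [← hw'f]
    simp only [mul_assoc]
    rw [hap, hfaf, hw'f]
  have hee : (w * f * w') * (w * f * w') = w * f * w' := by
    simp only [mul_assoc]
    rw [hfw', hkey]
  have hEL : w * f * w' ∈ L := hLmul (w * f) w' hw'L
  have hER : w * f * w' ∈ R := by
    rw [mul_assoc]; exact hRmul (f * w') w hwR
  refine ⟨w * f * w', ⟨⟨hEL, hER⟩, hee⟩, ?_⟩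
  rintro y ⟨⟨hyL, hyR⟩, hyy⟩
  exact uniq (w * f * w') y hEL hER hyL hyR hee hyy
end

section
/- For a minimal dynamical system (X,T), two points x, y ∈ X are proximal if and only if there exists a minimal idempotent p in the Ellis semigroup E(X,T) with p(y) = x. -/
/-!
If `x` and `y` are proximal, compactness of the Ellis semigroup `E` gives `q ∈ E` with
`q x = q y`. By Zorn's lemma the closed left ideal `E ∘ q` contains a minimal closed left ideal
`M`; every element of `M` identifies `x` and `y`, and minimality of the system makes
`f ↦ f y` map `M` onto `X`. Hence `{f ∈ M | f y = x}` is a nonempty compact subsemigroup, which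
contains an idempotent by the Ellis–Numakura lemma. An idempotent of a minimal left ideal lies
in every two-sided ideal. Conversely, an idempotent `p` with `p y = x` also has `p x = x`, and
approximating `p` by elements of `T` brings `x` and `y` together.
-/

/-- The Ellis semigroup of the action. -/
def Ellis (T : Type*) (X : Type*) [TopologicalSpace X] [SMul T X] : Set (X → X) :=
  closure (Set.range fun t : T => fun x : X => t • x)

/-- A two-sided ideal of a sub-semigroup `E` of `X → X` under composition. -/
def IsIdealIn {X : Type*} (E I : Set (X → X)) : Prop :=
  I ⊆ E ∧ I.Nonempty ∧ ∀ f ∈ E, ∀ g ∈ I, f ∘ g ∈ I ∧ g ∘ f ∈ I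

/-- A minimal idempotent of `E`: an idempotent belonging to every two-sided ideal. -/
def IsMinIdem {X : Type*} (E : Set (X → X)) (p : X → X) : Prop :=
  p ∈ E ∧ p ∘ p = p ∧ ∀ I : Set (X → X), IsIdealIn E I → p ∈ I

/-- Two points are proximal if the orbit of the pair comes arbitrarily close to the
diagonal. -/
def Proximal (T : Type*) {X : Type*} [MetricSpace X] [SMul T X] (x y : X) : Prop :=
  ∀ ε > 0, ∃ t : T, dist (t • x) (t • y) < ε

open Set

structure IsClosedLeftIdeal {X : Type*} [TopologicalSpace X] (E L : Set (X → X)) : Prop where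
  subset : L ⊆ E
  isClosed : IsClosed L
  nonempty : L.Nonempty
  comp_mem : ∀ e ∈ E, ∀ f ∈ L, e ∘ f ∈ L

section ClosedLeftIdeal

variable {X : Type*} [TopologicalSpace X] {E M : Set (X → X)}

theorem isClosedLeftIdeal_image_comp [T2Space X] (hE : IsCompact E)
    (hmul : ∀ f ∈ E, ∀ g ∈ E, f ∘ g ∈ E) {f : X → X} (hf : f ∈ E) :
    IsClosedLeftIdeal E ((· ∘ f) '' E) where
  subset := by
    rintro _ ⟨e, he, rfl⟩
    exact hmul e he f hf
  isClosed := (hE.image (Pi.continuous_precomp f)).isClosed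
  nonempty := ⟨f ∘ f, f, hf, rfl⟩
  comp_mem := by
    rintro e he _ ⟨g, hg, rfl⟩
    exact ⟨e ∘ g, hmul e he g hg, rfl⟩

theorem exists_minimal_isClosedLeftIdeal_subset {L : Set (X → X)} (hE : IsCompact E)
    (hL : IsClosedLeftIdeal E L) : ∃ M ⊆ L, Minimal (IsClosedLeftIdeal E) M := by
  refine zorn_superset_nonempty {L | IsClosedLeftIdeal E L} ?_ L hL
  rintro c hc hchain ⟨L₀, hL₀⟩
  have : Nonempty c := ⟨⟨L₀, hL₀⟩⟩
  refine ⟨⋂₀ c, ⟨?_, ?_, ?_, ?_⟩, fun L hL => sInter_subset_of_mem hL⟩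
  · exact (sInter_subset_of_mem hL₀).trans (hc hL₀).subset
  · exact isClosed_sInter fun L hL => (hc hL).isClosed
  · exact IsCompact.nonempty_sInter_of_directed_nonempty_isCompact_isClosed
      (fun a ha b hb => (hchain.total ha hb).elim (fun h => ⟨a, ha, subset_rfl, h⟩)
        fun h => ⟨b, hb, h, subset_rfl⟩) (fun L hL => (hc hL).nonempty)
      (fun L hL => hE.of_isClosed_subset (hc hL).isClosed (hc hL).subset)
      (fun L hL => (hc hL).isClosed)
  · exact fun e he f hf => mem_sInter.2 fun L hL => (hc hL).comp_mem e he f (mem_sInter.1 hf L hL)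

theorem Minimal.image_comp_eq [T2Space X] (hM : Minimal (IsClosedLeftIdeal E) M)
    (hE : IsCompact E) (hmul : ∀ f ∈ E, ∀ g ∈ E, f ∘ g ∈ E) {f : X → X}
    (hf : f ∈ M) : (· ∘ f) '' E = M := by
  refine hM.eq_of_subset (isClosedLeftIdeal_image_comp hE hmul (hM.prop.subset hf)) ?_
  rintro _ ⟨e, he, rfl⟩
  exact hM.prop.comp_mem e he f hf

/-- `M = E ∘ (g ∘ p)` for any `g ∈ I` and `p ∈ M`. -/
theorem Minimal.subset_of_isIdealIn [T2Space X] (hM : Minimal (IsClosedLeftIdeal E) M)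
    (hE : IsCompact E) (hmul : ∀ f ∈ E, ∀ g ∈ E, f ∘ g ∈ E) {I : Set (X → X)}
    (hI : IsIdealIn E I) : M ⊆ I := by
  obtain ⟨hIE, ⟨g, hg⟩, hIdeal⟩ := hI
  obtain ⟨p, hp⟩ := hM.prop.nonempty
  have hgpM : g ∘ p ∈ M := hM.prop.comp_mem g (hIE hg) p hp
  have hgpI : g ∘ p ∈ I := (hIdeal p (hM.prop.subset hp) g hg).2
  rw [← hM.image_comp_eq hE hmul hgpM]
  rintro _ ⟨e, he, rfl⟩
  exact (hIdeal e he _ hgpI).1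

theorem Minimal.isMinIdem_of_mem [T2Space X] (hM : Minimal (IsClosedLeftIdeal E) M)
    (hE : IsCompact E) (hmul : ∀ f ∈ E, ∀ g ∈ E, f ∘ g ∈ E) {p : X → X}
    (hp : p ∈ M) (hpp : p ∘ p = p) : IsMinIdem E p :=
  ⟨hM.prop.subset hp, hpp, fun _ hI => hM.subset_of_isIdealIn hE hmul hI hp⟩

theorem exists_comp_self_eq_of_isCompact [T2Space X] {A : Set (X → X)} (hA : IsCompact A)
    (hne : A.Nonempty) (hmul : ∀ f ∈ A, ∀ g ∈ A, f ∘ g ∈ A) : ∃ p ∈ A, p ∘ p = p :=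
  @exists_idempotent_in_compact_subsemigroup (Function.End X) _
    (inferInstanceAs (TopologicalSpace (X → X))) (inferInstanceAs (T2Space (X → X)))
    (fun r => Pi.continuous_precomp r) A hne hA hmul

theorem Minimal.exists_isMinIdem_apply_eq [T2Space X] (hM : Minimal (IsClosedLeftIdeal E) M)
    (hE : IsCompact E) (hmul : ∀ f ∈ E, ∀ g ∈ E, f ∘ g ∈ E) {x y : X}
    (hmerge : ∀ f ∈ M, f x = f y) (hyx : ∃ f ∈ M, f y = x) : ∃ p, IsMinIdem E p ∧ p y = x := by
  have hfiber_mul : ∀ g ∈ M ∩ {f | f y = x}, ∀ h ∈ M ∩ {f | f y = x},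
      g ∘ h ∈ M ∩ {f | f y = x} := by
    rintro g ⟨hgM, hgy : g y = x⟩ h ⟨hhM, hhy : h y = x⟩
    refine ⟨hM.prop.comp_mem g (hM.prop.subset hgM) h hhM, ?_⟩
    calc g (h y) = g x := congrArg g hhy
      _ = g y := hmerge g hgM
      _ = x := hgy
  obtain ⟨p, ⟨hpM, hpy⟩, hpp⟩ := exists_comp_self_eq_of_isCompact
    (hE.of_isClosed_subset (hM.prop.isClosed.inter (isClosed_eq (continuous_apply y)
      continuous_const)) (inter_subset_left.trans hM.prop.subset)) hyx hfiber_mul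
  exact ⟨p, hM.isMinIdem_of_mem hE hmul hpM hpp, hpy⟩

end ClosedLeftIdeal

section Ellis

variable {T X : Type*} [Monoid T] [TopologicalSpace X] [MulAction T X]

theorem isClosed_ellis : IsClosed (Ellis T X) := isClosed_closure

theorem isCompact_ellis [CompactSpace X] : IsCompact (Ellis T X) := isClosed_ellis.isCompact

theorem smul_mem_ellis (t : T) : (t • · : X → X) ∈ Ellis T X := subset_closure ⟨t, rfl⟩

theorem comp_mem_ellis (hcont : ∀ t : T, Continuous (t • · : X → X)) {f g : X → X}
    (hf : f ∈ Ellis T X) (hg : g ∈ Ellis T X) : f ∘ g ∈ Ellis T X := by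
  have smul_comp_mem : ∀ t : T, (t • · : X → X) ∘ g ∈ Ellis T X := by
    intro t
    refine map_mem_closure (t := range fun s : T => (s • · : X → X))
      (Pi.continuous_postcomp (hcont t)) hg ?_
    rintro _ ⟨s, rfl⟩
    exact ⟨t * s, funext fun x => mul_smul t s x⟩
  refine isClosed_ellis.closure_subset (map_mem_closure (f := (· ∘ g))
    (s := range fun s : T => (s • · : X → X)) (Pi.continuous_precomp g) hf ?_)
  rintro _ ⟨t, rfl⟩
  exact smul_comp_mem t

theorem IsClosedLeftIdeal.exists_apply_eq [T2Space X] [CompactSpace X]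
    (hmin : ∀ x : X, Dense (MulAction.orbit T x)) {M : Set (X → X)}
    (hM : IsClosedLeftIdeal (Ellis T X) M) (z w : X) : ∃ f ∈ M, f z = w := by
  obtain ⟨f₀, hf₀⟩ := hM.nonempty
  have hclosed : IsClosed ((fun f => f z) '' M) :=
    (hM.isClosed.isCompact.image (continuous_apply z)).isClosed
  have horbit : MulAction.orbit T (f₀ z) ⊆ (fun f => f z) '' M := by
    rintro _ ⟨t, rfl⟩
    exact ⟨_, hM.comp_mem _ (smul_mem_ellis t) f₀ hf₀, rfl⟩
  have hsurj : (fun f => f z) '' M = univ :=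
    hclosed.closure_eq ▸ ((hmin (f₀ z)).mono horbit).closure_eq
  exact (hsurj ▸ mem_univ w : w ∈ (fun f : X → X => f z) '' M)

end Ellis

theorem proximal_iff_exists_mem_ellis {T X : Type*} [Monoid T] [MetricSpace X] [CompactSpace X]
    [MulAction T X] {x y : X} : Proximal T x y ↔ ∃ q ∈ Ellis T X, q x = q y := by
  have hdist : Continuous fun f : X → X => dist (f x) (f y) :=
    (continuous_apply x).dist (continuous_apply y)
  constructor
  · intro h
    obtain ⟨q, hq, hqmin⟩ :=
      (isCompact_ellis (T := T)).exists_isMinOn ⟨_, smul_mem_ellis 1⟩ hdist.continuousOn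
    refine ⟨q, hq, ?_⟩
    by_contra hne
    obtain ⟨t, ht⟩ := h _ (dist_pos.2 hne)
    exact not_lt_of_ge (hqmin (smul_mem_ellis t)) ht
  · rintro ⟨q, hq, hqxy⟩ ε hε
    have hqU : q ∈ {f : X → X | dist (f x) (f y) < ε} := by simpa [hqxy] using hε
    obtain ⟨_, hfU, t, rfl⟩ := mem_closure_iff.1 hq _ (isOpen_lt hdist continuous_const) hqU
    exact ⟨t, hfU⟩

/-- For a minimal system `(X,T)` with `X` compact metric, `x, y` are proximal iff
there is a minimal idempotent `p` of the Ellis semigroup with `p y = x`. -/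
theorem stmt6 {T : Type*} [Group T] {X : Type*} [MetricSpace X] [CompactSpace X]
    [MulAction T X]
    (hcont : ∀ t : T, Continuous fun x : X => t • x)
    (hmin : ∀ x : X, Dense (MulAction.orbit T x))
    (x y : X) :
    Proximal T x y ↔ ∃ p : X → X, IsMinIdem (Ellis T X) p ∧ p y = x := by
  have hmul : ∀ f ∈ Ellis T X, ∀ g ∈ Ellis T X, f ∘ g ∈ Ellis T X :=
    fun _ hf _ hg => comp_mem_ellis hcont hf hg
  rw [proximal_iff_exists_mem_ellis]
  constructor
  · rintro ⟨q, hq, hqxy⟩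
    obtain ⟨M, hMq, hM⟩ := exists_minimal_isClosedLeftIdeal_subset isCompact_ellis
      (isClosedLeftIdeal_image_comp isCompact_ellis hmul hq)
    have hmerge : ∀ f ∈ M, f x = f y := by
      rintro _ hf
      obtain ⟨g, -, rfl⟩ := hMq hf
      exact congrArg g hqxy
    exact hM.exists_isMinIdem_apply_eq isCompact_ellis hmul hmerge
      (hM.prop.exists_apply_eq hmin y x)
  · rintro ⟨p, ⟨hpE, hpp, -⟩, hpy⟩
    refine ⟨p, hpE, ?_⟩
    rw [← hpy]
    exact congrFun hpp y
end

section
/- In a completely simple semigroup, the set of idempotents forms a subsemigroup (i.e., the semigroup is orthodox) if and only if for every idempotent e the subgroup of eEe generated by products e·p·q·e of pairs of idempotents p, q is trivial (equals {e}). -/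
private lemma mulrw {E : Type*} [Semigroup E] {a b c : E} (h : a * b = c) (x : E) :
    a * (b * x) = c * x := by rw [← mul_assoc, h]

private lemma mulrw3 {E : Type*} [Semigroup E] {a b c d : E} (h : a * b * c = d) (x : E) :
    a * (b * (c * x)) = d * x := by
  rw [← mul_assoc, ← mul_assoc, h]

/-- Simplicity in the useful form. -/
private lemma simple' {E : Type*} [Semigroup E]
    (hsimple : ∀ I : Set E, IsIdeal I → I = Set.univ) (a b : E) :
    ∃ u v, u * a * v = b := by
  have hI : IsIdeal {x : E | ∃ u v, u * a * v = x} := by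
    constructor
    · exact ⟨a * a * a, a, a, rfl⟩
    · rintro s x ⟨u, v, rfl⟩
      exact ⟨⟨s * u, v, by simp [mul_assoc]⟩, ⟨u, v * s, by simp [mul_assoc]⟩⟩
  have h := hsimple _ hI
  have hb : b ∈ {x : E | ∃ u v, u * a * v = x} := by rw [h]; trivial
  exact hb

/-- At the primitive idempotent `e`, every element of `eEe` is invertible. -/
private lemma group_eEe {E : Type*} [Semigroup E]
    (hs : ∀ a b : E, ∃ u v, u * a * v = b)
    {e : E} (he : e * e = e)
    (hp : ∀ f : E, f * f = f → (f * e = f ∧ e * f = f) → f = e)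
    (x : E) (hex : e * x = x) (hxe : x * e = x) :
    ∃ y : E, x * y = e ∧ y * x = e ∧ e * y = y ∧ y * e = y := by
  obtain ⟨u, v, huv⟩ := hs x e
  set l := e * (u * e) with hl
  set r := e * (v * e) with hr
  have hel : e * l = l := mulrw he (u * e)
  have hle : l * e = l := by rw [hl]; simp only [mul_assoc, he]
  have her : e * r = r := mulrw he (v * e)
  have hre : r * e = r := by rw [hr]; simp only [mul_assoc, he]
  have huv' : ∀ z, u * (x * (v * z)) = e * z := mulrw3 huv
  have hlxr : ∀ z, l * (x * (r * z)) = e * z := by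
    intro z
    rw [hl, hr]
    simp only [mul_assoc, mulrw hex, mulrw hxe, huv', mulrw he, he]
  have hlxr0 : l * (x * r) = e := by
    have := hlxr e
    rwa [hre, he] at this
  -- k₁ = x * (r * l) is idempotent below e, hence equals e
  have hk1 : x * (r * l) = e := by
    apply hp
    · simp only [mul_assoc, mulrw hlxr0, hlxr, hel, mulrw hel]
    constructor
    · simp only [mul_assoc, mulrw hle, hle]
    · simp only [mulrw hex]
  -- k₂ = r * (l * x) is idempotent below e, hence equals e
  have hk2 : r * (l * x) = e := by
    apply hp
    · simp only [mul_assoc, hlxr, mulrw hel, mulrw hlxr0, hel]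
    constructor
    · simp only [mul_assoc, hxe, mulrw hxe]
    · simp only [mulrw her]
  refine ⟨r * l, hk1 ▸ ?_, ?_, ?_, ?_⟩
  · rfl
  · rw [mul_assoc]; exact hk2
  · exact mulrw her l
  · rw [mul_assoc, hle]

/-- Every element lies in a subgroup. -/
private lemma inGroup {E : Type*} [Semigroup E]
    (hs : ∀ a b : E, ∃ u v, u * a * v = b)
    {e : E} (he : e * e = e)
    (hp : ∀ f : E, f * f = f → (f * e = f ∧ e * f = f) → f = e)
    (a : E) :
    ∃ f b, f * f = f ∧ f * a = a ∧ a * f = a ∧ a * b = f ∧ b * a = f := by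
  obtain ⟨u, v, huv⟩ := hs e a
  set s := u * e with hsdef
  set t := e * v with htdef
  have hst : s * t = a := by
    rw [hsdef, htdef, mul_assoc, ← mul_assoc e e v, he, ← mul_assoc, huv]
  have hse : s * e = s := by rw [hsdef, mul_assoc, he]
  have het : e * t = t := by rw [htdef, ← mul_assoc, he]
  have hets : e * (t * s) = t * s := mulrw het s
  have htse : (t * s) * e = t * s := by rw [mul_assoc, hse]
  obtain ⟨c', hcc', hc'c, hec', hc'e⟩ := group_eEe hs he hp (t * s) hets htse
  have hts : t * s = t * s := rfl
  refine ⟨s * (c' * t), s * (c' * (c' * t)), ?_, ?_, ?_, ?_, ?_⟩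
  · -- f * f = f
    show (s * (c' * t)) * (s * (c' * t)) = s * (c' * t)
    calc (s * (c' * t)) * (s * (c' * t))
        = s * (c' * (t * (s * (c' * t)))) := by simp only [mul_assoc]
      _ = s * (c' * ((t * s) * (c' * t))) := by rw [← mul_assoc t s]
      _ = s * (c' * (e * t)) := by rw [mulrw hcc']
      _ = s * (c' * t) := by rw [het]
  · -- f * a = a
    show (s * (c' * t)) * a = a
    rw [← hst]
    calc (s * (c' * t)) * (s * t)
        = s * (c' * (t * (s * t))) := by simp only [mul_assoc]
      _ = s * (c' * ((t * s) * t)) := by rw [← mul_assoc t s]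
      _ = s * (e * t) := by rw [mulrw hc'c]
      _ = s * t := by rw [het]
  · -- a * f = a
    show a * (s * (c' * t)) = a
    rw [← hst]
    calc (s * t) * (s * (c' * t))
        = s * (t * (s * (c' * t))) := by simp only [mul_assoc]
      _ = s * ((t * s) * (c' * t)) := by rw [← mul_assoc t s]
      _ = s * (e * t) := by rw [mulrw hcc']
      _ = s * t := by rw [het]
  · -- a * b = f
    show a * (s * (c' * (c' * t))) = s * (c' * t)
    rw [← hst]
    calc (s * t) * (s * (c' * (c' * t)))
        = s * (t * (s * (c' * (c' * t)))) := by simp only [mul_assoc]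
      _ = s * ((t * s) * (c' * (c' * t))) := by rw [← mul_assoc t s]
      _ = s * (e * (c' * t)) := by rw [mulrw hcc']
      _ = s * (c' * t) := by rw [mulrw hec']
  · -- b * a = f
    show (s * (c' * (c' * t))) * a = s * (c' * t)
    rw [← hst]
    calc (s * (c' * (c' * t))) * (s * t)
        = s * (c' * (c' * (t * (s * t)))) := by simp only [mul_assoc]
      _ = s * (c' * (c' * ((t * s) * t))) := by rw [← mul_assoc t s]
      _ = s * (c' * (e * t)) := by rw [mulrw hc'c]
      _ = s * (c' * t) := by rw [het]

/-- All idempotents are primitive. -/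
private lemma primitive {E : Type*} [Semigroup E]
    (hs : ∀ a b : E, ∃ u v, u * a * v = b)
    (hgroups : ∀ a : E, ∃ f b, f * f = f ∧ f * a = a ∧ a * f = a ∧ a * b = f ∧ b * a = f)
    (e f : E) (he : e * e = e) (hf : f * f = f) (hef : e * f = f) (hfe : f * e = f) :
    f = e := by
  obtain ⟨x, y, hxy⟩ := hs f e
  set a := e * (x * f) with hadef
  set b := f * (y * e) with hbdef
  have hab : a * b = e := by
    rw [hadef, hbdef]
    calc (e * (x * f)) * (f * (y * e))
        = e * (x * (f * (f * (y * e)))) := by simp only [mul_assoc]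
      _ = e * (x * (f * (y * e))) := by rw [mulrw hf]
      _ = e * (e * e) := by rw [mulrw3 hxy]
      _ = e := by rw [he, he]
  have haf : a * f = a := by
    rw [hadef]
    simp only [mul_assoc, hf]
  obtain ⟨g, d, hgg, hga, hag, had, hda⟩ := hgroups a
  have hgf : g * f = g := by
    rw [← hda, mul_assoc, haf]
  have hge : g * e = g := by
    rw [← hgf, mul_assoc, hfe]
  have heg : e = g := by
    rw [← hab, ← hga, mul_assoc, hab, hge]
  rw [← hef, heg, hgf, ← heg]

/-- In a completely simple semigroup, the idempotents form a subsemigroup (the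
semigroup is orthodox) if and only if for every idempotent `e` the subgroup of `eEe`
generated by the products `e·p·q·e` (`p, q` idempotents) is trivial, i.e. every such
generator equals `e`. -/
theorem stmt7 {E : Type*} [Semigroup E]
    (hsimple : ∀ I : Set E, IsIdeal I → I = Set.univ)
    (hprim : ∃ e : E, e * e = e ∧ ∀ f : E, f * f = f → (f * e = f ∧ e * f = f) → f = e) :
    (∀ p q : E, p * p = p → q * q = q → (p * q) * (p * q) = p * q) ↔
    (∀ e : E, e * e = e → ∀ p q : E, p * p = p → q * q = q → e * (p * q) * e = e) := by
  obtain ⟨e₀, he₀, hp₀⟩ := hprim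
  have hs := simple' hsimple
  have hgroups := inGroup hs he₀ hp₀
  have hprimAll := primitive hs hgroups
  constructor
  · intro horth e he p q hp hq
    have hj : (p * q) * (p * q) = p * q := horth p q hp hq
    have hje : ((p * q) * e) * ((p * q) * e) = (p * q) * e := horth _ _ hj he
    have hje2 : ((p * q) * e) * e = (p * q) * e := by rw [mul_assoc, he]
    have hidem : (e * (p * q) * e) * (e * (p * q) * e) = e * (p * q) * e := by
      calc (e * (p * q) * e) * (e * (p * q) * e)
          = e * (((p * q) * e) * (e * ((p * q) * e))) := by simp only [mul_assoc]
        _ = e * (((p * q) * e) * ((p * q) * e)) := by rw [mulrw hje2]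
        _ = e * ((p * q) * e) := by rw [hje]
        _ = e * (p * q) * e := by simp only [mul_assoc]
    have hef : e * (e * (p * q) * e) = e * (p * q) * e := by
      rw [← mul_assoc, ← mul_assoc, he]
    have hfe : (e * (p * q) * e) * e = e * (p * q) * e := by
      rw [mul_assoc (e * (p * q)) e e, he]
    exact hprimAll e (e * (p * q) * e) he hidem hef hfe
  · intro htriv p q hp hq
    obtain ⟨f, b, hff, hfa, haf, _, _⟩ := hgroups (p * q)
    have h := htriv f hff p q hp hq
    have hpq : p * q = f := by rw [← h, hfa, haf]
    rw [hpq, hff]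
end

section
/- Let G be a compact Hausdorff topological abelian group and L a subgroup of G. The quotient G/L is uncountable if and only if L is not open in G. -/
/-!
Countably many translates of `L` cover the Baire space `G`, so `L` is not meagre. Pettis'
argument then makes `L` open: `L` agrees with a nonempty open set `u` up to a meagre set, and
for `b ∈ L ∩ u` and `a ∈ u` the sets `(a * b⁻¹) • L` and `L` are both comeagre in the open
set `(a * b⁻¹) • u ∩ u ∋ a`, hence meet, which forces `a ∈ L`. Conversely, an open subgroup
of a compact group has finite index.
-/

open Topology Filter Set Pointwise

section Residual

variable {X : Type*} [TopologicalSpace X] {s t u : Set X}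

theorem IsMeagre.of_residualEq (ht : IsMeagre t) (h : s =ᵇ t) : IsMeagre s := by
  filter_upwards [ht, h] with x hxt hx
  exact fun hxs ↦ hxt (Eq.mp hx hxs)

theorem nonempty_inter_of_residualEq_isOpen [BaireSpace X] (hu : IsOpen u) (hne : u.Nonempty)
    (h : s =ᵇ u) : (s ∩ u).Nonempty := by
  by_contra hempty
  refine not_isMeagre_of_isOpen hu hne ?_
  filter_upwards [h] with x hx hxu
  exact hempty ⟨x, Eq.mpr hx hxu, hxu⟩

variable {G : Type*} [Group G] [MulAction G X] [ContinuousConstSMul G X]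

theorem IsMeagre.smul_set (g : G) (h : IsMeagre s) : IsMeagre (g • s) := by
  rw [← preimage_smul_inv]
  exact h.preimage_of_isOpenMap (continuous_const_smul _) (isOpenMap_smul _)

theorem residualEq_smul_set (g : G) (h : s =ᵇ t) : g • s =ᵇ g • t := by
  rw [← preimage_smul_inv, ← preimage_smul_inv]
  exact h.comp_tendsto (tendsto_residual_of_isOpenMap (continuous_const_smul _) (isOpenMap_smul _))

end Residual

namespace Subgroup

variable {G : Type*} [Group G] [TopologicalSpace G] [IsTopologicalGroup G] [BaireSpace G]

theorem not_isMeagre_of_countable_quotient (L : Subgroup G) [Countable (G ⧸ L)] :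
    ¬ IsMeagre (L : Set G) := fun hL ↦
  not_isMeagre_of_isOpen isOpen_univ univ_nonempty <| by
    rw [QuotientGroup.univ_eq_iUnion_smul L]
    exact isMeagre_iUnion fun q ↦ hL.smul_set q.out

theorem isOpen_of_baireMeasurableSet_of_not_isMeagre {L : Subgroup G}
    (hL : BaireMeasurableSet (L : Set G)) (hnm : ¬ IsMeagre (L : Set G)) : IsOpen (L : Set G) := by
  obtain ⟨u, hu, hLu⟩ := hL.residualEq_isOpen
  have hune : u.Nonempty := nonempty_of_not_isMeagre fun h ↦ hnm (h.of_residualEq hLu)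
  obtain ⟨b, hbL, hbu⟩ := nonempty_inter_of_residualEq_isOpen hu hune hLu
  refine L.isOpen_of_mem_nhds (mem_of_superset (hu.mem_nhds hbu) fun a hau ↦ ?_)
  set g := a * b⁻¹
  have hau' : a ∈ g • u := ⟨b, hbu, by simp [g]⟩
  obtain ⟨x, ⟨⟨l, hl, rfl⟩, hgl⟩, -⟩ := nonempty_inter_of_residualEq_isOpen
    ((hu.smul g).inter hu) ⟨a, hau', hau⟩ ((residualEq_smul_set g hLu).inter hLu)
  have hg : g ∈ L := by simpa using L.mul_mem hgl (L.inv_mem hl)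
  simpa [g] using L.mul_mem hg hbL

end Subgroup

theorem stmt10_general {G : Type*} [CommGroup G] [TopologicalSpace G] [IsTopologicalGroup G]
    [CompactSpace G] (L : Subgroup G)
    (hBaire : BaireMeasurableSet (L : Set G)) :
    ¬ Countable (G ⧸ L) ↔ ¬ IsOpen (L : Set G) := by
  rw [not_iff_not]
  refine ⟨fun _ ↦ ?_, fun hL ↦ ?_⟩
  · exact L.isOpen_of_baireMeasurableSet_of_not_isMeagre hBaire
      L.not_isMeagre_of_countable_quotient
  · have := L.quotient_finite_of_isOpen hL
    exact Finite.to_countable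

/-- Let `G` be a compact Hausdorff topological abelian group and `L` a subgroup with
the Baire property. Then `G/L` is uncountable if and only if `L` is not open. -/
theorem stmt10 {G : Type*} [CommGroup G] [TopologicalSpace G] [IsTopologicalGroup G]
    [CompactSpace G] [T2Space G] (L : Subgroup G)
    (hBaire : BaireMeasurableSet (L : Set G)) :
    ¬ Countable (G ⧸ L) ↔ ¬ IsOpen (L : Set G) :=
  stmt10_general L hBaire
end

section
/- Let (X,T) be minimal with T abelian and maximal equicontinuous factor π: X → X_max, where X_max is a compact abelian group. For f in the fiber-preserving subgroup K_e of the structure group H_e = eE(X)e, and for a ∈ X_max with section s: X_max → H_e satisfying ev_0 ∘ π_* ∘ s = id, the support of s(a)·f·s(a)^{-1} equals supp(f) + a. -/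
/-- The support of `f`: the set of `ξ` in the factor group on which `f` does not fix
every point of `e · π⁻¹(ξ)`. -/
def FiberSupp {X : Type*} {G : Type*} (π : X → G) (e f : X → X) : Set G :=
  {ξ : G | ∃ x ∈ e '' (π ⁻¹' {ξ}), f x ≠ x}

/-!
Every element of the Ellis semigroup is a pointwise limit of translations, so it acts on the
equicontinuous factor as a translation; an idempotent therefore acts trivially there. Hence
`supp(f)` is the `π`-image of the points fixed by `e` and moved by `f`. Conjugation by `s(a)`
carries these points bijectively onto the corresponding points of `s(a) ∘ f ∘ s(a)⁻¹`, and
`π ∘ s(a)` is `π` followed by translation by `a`.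
-/

section Ellis

variable {T X G : Type*} [TopologicalSpace X] [SMul T X]
  [AddCommGroup G] [TopologicalSpace G] [IsTopologicalAddGroup G] [T2Space G]
  {π : X → G} {ι : T → G}

theorem map_sub_map_of_mem_ellis (hπc : Continuous π)
    (hπe : ∀ (t : T) (x : X), π (t • x) = ι t + π x)
    {g : X → X} (hg : g ∈ Ellis T X) (x y : X) :
    π (g x) - π (g y) = π x - π y := by
  have hclosed : IsClosed {g : X → X | π (g x) - π (g y) = π x - π y} :=
    isClosed_eq ((hπc.comp (continuous_apply x)).sub (hπc.comp (continuous_apply y)))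
      continuous_const
  refine closure_minimal ?_ hclosed hg
  rintro _ ⟨t, rfl⟩
  simp only [Set.mem_ofPred_eq, hπe, add_sub_add_left_eq_sub]

theorem map_apply_eq_of_mem_ellis_of_idempotent (hπc : Continuous π)
    (hπe : ∀ (t : T) (x : X), π (t • x) = ι t + π x)
    {e : X → X} (heE : e ∈ Ellis T X) (hee : e ∘ e = e) (x : X) :
    π (e x) = π x := by
  have h := map_sub_map_of_mem_ellis hπc hπe heE (e x) x
  rwa [show e (e x) = e x from congrFun hee x, sub_self, eq_comm, sub_eq_zero] at h

end Ellis

section Functions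

variable {X G : Type*}

theorem comp_eq_of_eq_sandwich {e h p : X → X} (hee : e ∘ e = e) (hp : p = e ∘ h ∘ e) :
    e ∘ p = p := by
  rw [hp, ← Function.comp_assoc, hee]

theorem fiberSupp_eq_image_fixed_moved {π : X → G} {e : X → X} (hee : e ∘ e = e)
    (hπe : ∀ x, π (e x) = π x) (f : X → X) :
    FiberSupp π e f = π '' {x | e x = x ∧ f x ≠ x} := by
  ext ξ
  constructor
  · rintro ⟨_, ⟨y, rfl, rfl⟩, hne⟩
    exact ⟨e y, ⟨congrFun hee y, hne⟩, hπe y⟩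
  · rintro ⟨x, ⟨hex, hne⟩, rfl⟩
    exact ⟨x, ⟨x, rfl, hex⟩, hne⟩

theorem fixed_moved_conj_eq_image {e f s s' : X → X} (hss' : s ∘ s' = e) (hs's : s' ∘ s = e)
    (hes : e ∘ s = s) (hes' : e ∘ s' = s') (hef : e ∘ f = f) :
    {x | e x = x ∧ (s ∘ f ∘ s') x ≠ x} = s '' {y | e y = y ∧ f y ≠ y} := by
  ext x
  constructor
  · rintro ⟨hex, hne⟩
    refine ⟨s' x, ⟨congrFun hes' x, fun hfix => hne ?_⟩, ?_⟩
    · change s (f (s' x)) = x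
      rw [hfix]
      exact (congrFun hss' x).trans hex
    · exact (congrFun hss' x).trans hex
  · rintro ⟨y, ⟨hey, hne⟩, rfl⟩
    refine ⟨congrFun hes y, fun hfix => hne ?_⟩
    have h := congrArg s' hfix
    change (s' ∘ s) (f ((s' ∘ s) y)) = (s' ∘ s) y at h
    rwa [hs's, hey, ← Function.comp_apply (f := e), hef] at h

end Functions

theorem stmt13_general {T : Type*} [CommGroup T]
    {X : Type*} [TopologicalSpace X] [MulAction T X]
    {G : Type*} [AddCommGroup G] [TopologicalSpace G] [IsTopologicalAddGroup G]
    [T2Space G]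
    (π : X → G) (hπc : Continuous π)
    (ι : T → G) (hπe : ∀ (t : T) (x : X), π (t • x) = ι t + π x)
    (e : X → X) (he : IsMinIdem (Ellis T X) e)
    (f : X → X) (hfH : ∃ h ∈ Ellis T X, f = e ∘ h ∘ e)
    (s s' : G → X → X)
    (hsH : ∀ a : G, ∃ h ∈ Ellis T X, s a = e ∘ h ∘ e)
    (hs'H : ∀ a : G, ∃ h ∈ Ellis T X, s' a = e ∘ h ∘ e)
    (hsπ : ∀ (a : G) (x : X), π (s a x) = π x + a)
    (hsinv : ∀ a : G, s a ∘ s' a = e ∧ s' a ∘ s a = e)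
    (a : G) :
    FiberSupp π e (s a ∘ f ∘ s' a) = (fun ξ : G => ξ + a) '' FiberSupp π e f := by
  obtain ⟨heE, hee, -⟩ := he
  have hπe' := map_apply_eq_of_mem_ellis_of_idempotent hπc hπe heE hee
  obtain ⟨_, -, hf⟩ := hfH
  obtain ⟨_, -, hs⟩ := hsH a
  obtain ⟨_, -, hs'⟩ := hs'H a
  rw [fiberSupp_eq_image_fixed_moved hee hπe', fiberSupp_eq_image_fixed_moved hee hπe',
    fixed_moved_conj_eq_image (hsinv a).1 (hsinv a).2 (comp_eq_of_eq_sandwich hee hs)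
      (comp_eq_of_eq_sandwich hee hs') (comp_eq_of_eq_sandwich hee hf),
    Set.image_image, Set.image_image]
  simp only [hsπ]

/-- Shift lemma: for `f` in the fibre-preserving subgroup `K_e` of the structure group
`H_e = eE(X)e` and a section `s` of `ev₀ ∘ π_*`, the support of `s(a) ∘ f ∘ s(a)⁻¹`
equals `supp(f) + a`. -/
theorem stmt13 {T : Type*} [CommGroup T]
    {X : Type*} [TopologicalSpace X] [CompactSpace X] [T2Space X] [MulAction T X]
    {G : Type*} [AddCommGroup G] [TopologicalSpace G] [IsTopologicalAddGroup G]
    [CompactSpace G] [T2Space G]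
    (hcont : ∀ t : T, Continuous fun x : X => t • x)
    (hmin : ∀ x : X, Dense (MulAction.orbit T x))
    (π : X → G) (hπc : Continuous π) (hπs : Function.Surjective π)
    (ι : T → G) (hπe : ∀ (t : T) (x : X), π (t • x) = ι t + π x)
    (e : X → X) (he : IsMinIdem (Ellis T X) e)
    (f : X → X) (hfH : ∃ h ∈ Ellis T X, f = e ∘ h ∘ e) (hfK : ∀ x : X, π (f x) = π x)
    (s s' : G → X → X)
    (hsH : ∀ a : G, ∃ h ∈ Ellis T X, s a = e ∘ h ∘ e)
    (hs'H : ∀ a : G, ∃ h ∈ Ellis T X, s' a = e ∘ h ∘ e)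
    (hsπ : ∀ (a : G) (x : X), π (s a x) = π x + a)
    (hsinv : ∀ a : G, s a ∘ s' a = e ∧ s' a ∘ s a = e)
    (hsT : ∀ (t : T) (a : G), s (ι t + a) = (fun x : X => t • x) ∘ s a)
    (a : G) :
    FiberSupp π e (s a ∘ f ∘ s' a) = (fun ξ : G => ξ + a) '' FiberSupp π e f :=
  stmt13_general π hπc ι hπe e he f hfH s s' hsH hs'H hsπ hsinv a
end
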